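/- (Invariance under twisting for crossed products.) Let A ⊗_{R,σ} V be a Brzeziński crossed product and θ, γ : V → A ⊗ V linear maps, written θ(v) = v_{<-1>} ⊗ v_{<0>} and γ(v) = v_{\{-1\}} ⊗ v_{\{0\}}. Define R' = (μ₂⊗id_V)∘(id_A⊗id_A⊗γ)∘(id_A⊗R)∘(θ⊗id_A) and σ' = (μ⊗id_V)∘(id_A⊗γ)∘(μ₂⊗id_V)∘(id_A⊗id_A⊗σ)∘(id_A⊗R⊗id_V)∘(θ⊗θ). If θ(1_V) = γ(1_V) = 1_A⊗1_V, v_{<-1>} v_{<0>_{\{-1\}}} ⊗ v_{<0>_{\{0\}}} = 1_A ⊗ v, v_{\{-1\}} v_{\{0\}_{<-1>}} ⊗ v_{\{0\}_{<0>}} = 1_A ⊗ v for all v ∈ V, and (μ⊗id_V)∘(μ⊗σ')∘(id_A⊗γ⊗id_V)∘(R⊗id_V)∘(id_V⊗γ) = (μ⊗id_V)∘(id_A⊗γ)∘σ, then A ⊗_{R',σ'} V is a Brzeziński crossed product and the map φ : A ⊗_{R',σ'} V → A ⊗_{R,σ} V, φ(a⊗v) = a v_{<-1>} ⊗ v_{<0>},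 is an algebra isomorphism. -/

import Mathlib

open TensorProduct LinearMap Coalgebra

noncomputable section

namespace Paper

universe u

variable (k : Type u) [Field k]

section AlgebraSide

variable (A : Type u) [Ring A] [Algebra k A]
variable (V : Type u) [AddCommGroup V] [Module k V]

/-- `a ⊗ (b ⊗ v) ↦ ab ⊗ v`. -/
def muls2 : A ⊗[k] (A ⊗[k] V) →ₗ[k] A ⊗[k] V :=
  rTensor V (mul' k A) ∘ₗ (TensorProduct.assoc k A A V).symm.toLinearMap

/-- `a ⊗ (b ⊗ (c ⊗ v)) ↦ abc ⊗ v`. -/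
def muls3 : A ⊗[k] (A ⊗[k] (A ⊗[k] V)) →ₗ[k] A ⊗[k] V :=
  muls2 k A V ∘ₗ lTensor A (muls2 k A V)

variable {A V}

/-- The multiplication of the Brzezinski crossed product `A ⊗_{R,σ} V`. -/
def brzMul (R : V ⊗[k] A →ₗ[k] A ⊗[k] V) (σ : V ⊗[k] V →ₗ[k] A ⊗[k] V) :
    (A ⊗[k] V) ⊗[k] (A ⊗[k] V) →ₗ[k] A ⊗[k] V :=
  muls2 k A V ∘ₗ
    lTensor A (muls2 k A V ∘ₗ lTensor A σ ∘ₗ (TensorProduct.assoc k A V V).toLinearMap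
      ∘ₗ rTensor V R ∘ₗ (TensorProduct.assoc k V A V).symm.toLinearMap) ∘ₗ
    (TensorProduct.assoc k A V (A ⊗[k] V)).toLinearMap

/-- The axioms (1.1)--(1.5) of a Brzezinski crossed product. -/
structure IsBrzezinski (e : V) (R : V ⊗[k] A →ₗ[k] A ⊗[k] V)
    (σ : V ⊗[k] V →ₗ[k] A ⊗[k] V) : Prop where
  unit_R_left : ∀ a : A, R (e ⊗ₜ a) = a ⊗ₜ e
  unit_R_right : ∀ v : V, R (v ⊗ₜ (1 : A)) = (1 : A) ⊗ₜ v
  unit_σ_left : ∀ v : V, σ (e ⊗ₜ v) = (1 : A) ⊗ₜ v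
  unit_σ_right : ∀ v : V, σ (v ⊗ₜ e) = (1 : A) ⊗ₜ v
  brz3 : R ∘ₗ lTensor V (mul' k A)
      = rTensor V (mul' k A) ∘ₗ (TensorProduct.assoc k A A V).symm.toLinearMap
        ∘ₗ lTensor A R ∘ₗ (TensorProduct.assoc k A V A).toLinearMap
        ∘ₗ rTensor A R ∘ₗ (TensorProduct.assoc k V A A).symm.toLinearMap
  brz4 : muls2 k A V ∘ₗ lTensor A σ ∘ₗ (TensorProduct.assoc k A V V).toLinearMap
        ∘ₗ rTensor V R ∘ₗ (TensorProduct.assoc k V A V).symm.toLinearMap ∘ₗ lTensor V σ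
      = muls2 k A V ∘ₗ lTensor A σ ∘ₗ (TensorProduct.assoc k A V V).toLinearMap
        ∘ₗ rTensor V σ ∘ₗ (TensorProduct.assoc k V V V).symm.toLinearMap
  brz5 : muls2 k A V ∘ₗ lTensor A σ ∘ₗ (TensorProduct.assoc k A V V).toLinearMap
        ∘ₗ rTensor V R ∘ₗ (TensorProduct.assoc k V A V).symm.toLinearMap ∘ₗ lTensor V R
      = muls2 k A V ∘ₗ lTensor A R ∘ₗ (TensorProduct.assoc k A V A).toLinearMap
        ∘ₗ rTensor A σ ∘ₗ (TensorProduct.assoc k V V A).symm.toLinearMap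

/-- The twisted tensor product multiplication on `A ⊗ B`, for a "multiplication"
`m` on the vector space `B`. -/
def ttMul {B : Type u} [AddCommGroup B] [Module k B]
    (R : B ⊗[k] A →ₗ[k] A ⊗[k] B) (m : B ⊗[k] B →ₗ[k] B) :
    (A ⊗[k] B) ⊗[k] (A ⊗[k] B) →ₗ[k] A ⊗[k] B :=
  muls2 k A B ∘ₗ
    lTensor A (lTensor A m ∘ₗ (TensorProduct.assoc k A B B).toLinearMap
      ∘ₗ rTensor B R ∘ₗ (TensorProduct.assoc k B A B).symm.toLinearMap) ∘ₗ
    (TensorProduct.assoc k A B (A ⊗[k] B)).toLinearMap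

/-- The axioms of a twisting map `R : B ⊗ A → A ⊗ B`, where the algebra structure on
the vector space `B` is given by the multiplication `m` with unit `e`. -/
structure IsTwisting {B : Type u} [AddCommGroup B] [Module k B]
    (R : B ⊗[k] A →ₗ[k] A ⊗[k] B) (m : B ⊗[k] B →ₗ[k] B) (e : B) : Prop where
  unit_left : ∀ a : A, R (e ⊗ₜ a) = a ⊗ₜ e
  unit_right : ∀ b : B, R (b ⊗ₜ (1 : A)) = (1 : A) ⊗ₜ b
  mul_A : R ∘ₗ lTensor B (mul' k A)
      = rTensor B (mul' k A) ∘ₗ (TensorProduct.assoc k A A B).symm.toLinearMap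
        ∘ₗ lTensor A R ∘ₗ (TensorProduct.assoc k A B A).toLinearMap
        ∘ₗ rTensor A R ∘ₗ (TensorProduct.assoc k B A A).symm.toLinearMap
  mul_B : R ∘ₗ rTensor A m
      = lTensor A m ∘ₗ (TensorProduct.assoc k A B B).toLinearMap
        ∘ₗ rTensor B R ∘ₗ (TensorProduct.assoc k B A B).symm.toLinearMap
        ∘ₗ lTensor B R ∘ₗ (TensorProduct.assoc k B B A).toLinearMap

/-- The deformed map `R'` of the invariance under twisting theorem (formula (Rprim)). -/
def Rtw (R : V ⊗[k] A →ₗ[k] A ⊗[k] V) (θ γ : V →ₗ[k] A ⊗[k] V) :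
    V ⊗[k] A →ₗ[k] A ⊗[k] V :=
  muls3 k A V ∘ₗ lTensor A (lTensor A γ) ∘ₗ lTensor A R
    ∘ₗ (TensorProduct.assoc k A V A).toLinearMap ∘ₗ rTensor A θ

/-- The deformed map `σ'` of the invariance under twisting theorem (formula (sigmaprim)). -/
def σtw (R : V ⊗[k] A →ₗ[k] A ⊗[k] V) (σ : V ⊗[k] V →ₗ[k] A ⊗[k] V)
    (θ γ : V →ₗ[k] A ⊗[k] V) : V ⊗[k] V →ₗ[k] A ⊗[k] V :=
  muls2 k A V ∘ₗ lTensor A γ ∘ₗ muls3 k A V ∘ₗ lTensor A (lTensor A σ)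
    ∘ₗ lTensor A ((TensorProduct.assoc k A V V).toLinearMap ∘ₗ rTensor V R
        ∘ₗ (TensorProduct.assoc k V A V).symm.toLinearMap)
    ∘ₗ (TensorProduct.assoc k A V (A ⊗[k] V)).toLinearMap ∘ₗ TensorProduct.map θ θ

/-- Condition (cros4), relative to a map `σ'`. -/
def Cros4 (R : V ⊗[k] A →ₗ[k] A ⊗[k] V) (σ : V ⊗[k] V →ₗ[k] A ⊗[k] V)
    (γ : V →ₗ[k] A ⊗[k] V) (σ' : V ⊗[k] V →ₗ[k] A ⊗[k] V) : Prop :=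
  muls2 k A V ∘ₗ TensorProduct.map (mul' k A) σ'
      ∘ₗ (TensorProduct.assoc k (A ⊗[k] A) V V).toLinearMap
      ∘ₗ rTensor V (TensorProduct.assoc k A A V).symm.toLinearMap
      ∘ₗ rTensor V (lTensor A γ) ∘ₗ rTensor V R
      ∘ₗ (TensorProduct.assoc k V A V).symm.toLinearMap ∘ₗ lTensor V γ
    = muls2 k A V ∘ₗ lTensor A γ ∘ₗ σ

/-- Conditions (cros1)--(cros3) on the pair `(θ, γ)`. -/
def Cros123 (e : V) (θ γ : V →ₗ[k] A ⊗[k] V) : Prop :=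
  θ e = (1 : A) ⊗ₜ e ∧ γ e = (1 : A) ⊗ₜ e ∧
  muls2 k A V ∘ₗ lTensor A γ ∘ₗ θ = TensorProduct.mk k A V 1 ∧
  muls2 k A V ∘ₗ lTensor A θ ∘ₗ γ = TensorProduct.mk k A V 1

/-- The map `φ(a ⊗ v) = a v_{<-1>} ⊗ v_{<0>}`. -/
def φtw (θ : V →ₗ[k] A ⊗[k] V) : A ⊗[k] V →ₗ[k] A ⊗[k] V :=
  muls2 k A V ∘ₗ lTensor A θ

end AlgebraSide

section CoalgebraSide

variable (C : Type u) [AddCommGroup C] [Module k C] [Coalgebra k C]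
variable (X : Type u) [AddCommGroup X] [Module k X]

variable {C X}

/-- The comultiplication of the crossed coproduct `X_{W,ρ} ⊗ C`. -/
def coDelta (W : X ⊗[k] C →ₗ[k] C ⊗[k] X) (ρ : X ⊗[k] C →ₗ[k] X ⊗[k] X) :
    X ⊗[k] C →ₗ[k] (X ⊗[k] C) ⊗[k] (X ⊗[k] C) :=
  (TensorProduct.assoc k X C (X ⊗[k] C)).symm.toLinearMap ∘ₗ
  lTensor X (TensorProduct.assoc k C X C).toLinearMap ∘ₗ
  lTensor X (rTensor C W) ∘ₗ
  lTensor X (TensorProduct.assoc k X C C).symm.toLinearMap ∘ₗ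
  (TensorProduct.assoc k X X (C ⊗[k] C)).toLinearMap ∘ₗ
  TensorProduct.map ρ comul ∘ₗ
  (TensorProduct.assoc k X C C).symm.toLinearMap ∘ₗ
  lTensor X comul

/-- The counit `ε_X ⊗ ε_C` of the crossed coproduct. -/
def coEps (εX : X →ₗ[k] k) : X ⊗[k] C →ₗ[k] k :=
  (TensorProduct.lid k k).toLinearMap ∘ₗ TensorProduct.map εX counit

/-- The axioms (cobrz1)--(cobrz5) of a crossed coproduct. -/
structure IsCoBrzezinski (εX : X →ₗ[k] k) (W : X ⊗[k] C →ₗ[k] C ⊗[k] X)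
    (ρ : X ⊗[k] C →ₗ[k] X ⊗[k] X) : Prop where
  counit_W_left : (TensorProduct.rid k C).toLinearMap ∘ₗ lTensor C εX ∘ₗ W
      = (TensorProduct.lid k C).toLinearMap ∘ₗ rTensor C εX
  counit_W_right : (TensorProduct.lid k X).toLinearMap ∘ₗ rTensor X counit ∘ₗ W
      = (TensorProduct.rid k X).toLinearMap ∘ₗ lTensor X counit
  counit_ρ_left : (TensorProduct.rid k X).toLinearMap ∘ₗ lTensor X εX ∘ₗ ρ
      = (TensorProduct.rid k X).toLinearMap ∘ₗ lTensor X counit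
  counit_ρ_right : (TensorProduct.lid k X).toLinearMap ∘ₗ rTensor X εX ∘ₗ ρ
      = (TensorProduct.rid k X).toLinearMap ∘ₗ lTensor X counit
  cobrz3 : rTensor X comul ∘ₗ W
      = (TensorProduct.assoc k C C X).symm.toLinearMap ∘ₗ lTensor C W
        ∘ₗ (TensorProduct.assoc k C X C).toLinearMap ∘ₗ rTensor C W
        ∘ₗ (TensorProduct.assoc k X C C).symm.toLinearMap ∘ₗ lTensor X comul
  cobrz4 : rTensor X ρ ∘ₗ (TensorProduct.assoc k X C X).symm.toLinearMap
        ∘ₗ lTensor X W ∘ₗ (TensorProduct.assoc k X X C).toLinearMap ∘ₗ rTensor C ρ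
        ∘ₗ (TensorProduct.assoc k X C C).symm.toLinearMap ∘ₗ lTensor X comul
      = (TensorProduct.assoc k X X X).symm.toLinearMap ∘ₗ lTensor X ρ
        ∘ₗ (TensorProduct.assoc k X X C).toLinearMap ∘ₗ rTensor C ρ
        ∘ₗ (TensorProduct.assoc k X C C).symm.toLinearMap ∘ₗ lTensor X comul
  cobrz5 : rTensor X W ∘ₗ (TensorProduct.assoc k X C X).symm.toLinearMap
        ∘ₗ lTensor X W ∘ₗ (TensorProduct.assoc k X X C).toLinearMap ∘ₗ rTensor C ρ
        ∘ₗ (TensorProduct.assoc k X C C).symm.toLinearMap ∘ₗ lTensor X comul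
      = (TensorProduct.assoc k C X X).symm.toLinearMap ∘ₗ lTensor C ρ
        ∘ₗ (TensorProduct.assoc k C X C).toLinearMap ∘ₗ rTensor C W
        ∘ₗ (TensorProduct.assoc k X C C).symm.toLinearMap ∘ₗ lTensor X comul

end CoalgebraSide

section BialgebraSide

variable (A : Type u) [Ring A] [Bialgebra k A]
variable (C : Type u) [AddCommGroup C] [Module k C] [Coalgebra k C]

/-- `W₀ : A ⊗ C → C ⊗ A`, the flip. -/
def W0 : A ⊗[k] C →ₗ[k] C ⊗[k] A := (TensorProduct.comm k A C).toLinearMap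

/-- `g₀ : A ⊗ C → A`, `a ⊗ c ↦ ε_C(c) a`. -/
def g0 : A ⊗[k] C →ₗ[k] A :=
  (TensorProduct.rid k A).toLinearMap ∘ₗ lTensor A counit

/-- `ρ₀ : A ⊗ C → A ⊗ A`, `a ⊗ c ↦ ε_C(c) Δ_A(a)`. -/
def ρ0 : A ⊗[k] C →ₗ[k] A ⊗[k] A := comul ∘ₗ g0 k A C

variable {A C}

/-- The property that a comultiplication `Δ` on `Y` is a morphism of algebras, where the
multiplication on `Y` is `m` and the one on `Y ⊗ Y` is componentwise (with the middle flip). -/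
def DeltaIsMulMap {Y : Type u} [AddCommGroup Y] [Module k Y]
    (m : Y ⊗[k] Y →ₗ[k] Y) (Δ : Y →ₗ[k] Y ⊗[k] Y) : Prop :=
  Δ ∘ₗ m = TensorProduct.map m m ∘ₗ (tensorTensorTensorComm k Y Y Y Y).toLinearMap
    ∘ₗ TensorProduct.map Δ Δ

/-- The property that a counit `ε` on `Y` is a morphism of algebras. -/
def EpsIsMulMap {Y : Type u} [AddCommGroup Y] [Module k Y]
    (m : Y ⊗[k] Y →ₗ[k] Y) (ε : Y →ₗ[k] k) : Prop :=
  ε ∘ₗ m = mul' k k ∘ₗ TensorProduct.map ε ε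

/-- `A_{W₀}^{ρ₀} ⋈_R^σ C` is a cross product bialgebra: the crossed product algebra
`A ⊗_{R,σ} C` together with the tensor product coalgebra structure on `A ⊗ C`
form a bialgebra. -/
structure IsCrossBialgebra0 (eC : C) (R : C ⊗[k] A →ₗ[k] A ⊗[k] C)
    (σ : C ⊗[k] C →ₗ[k] A ⊗[k] C) : Prop where
  brz : IsBrzezinski k eC R σ
  delta_mul : DeltaIsMulMap k (brzMul k R σ) (Coalgebra.comul (R := k) (A := A ⊗[k] C))
  delta_one : Coalgebra.comul (R := k) (A := A ⊗[k] C) ((1 : A) ⊗ₜ eC)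
      = ((1 : A) ⊗ₜ eC) ⊗ₜ[k] ((1 : A) ⊗ₜ eC)
  eps_mul : EpsIsMulMap k (brzMul k R σ) (Coalgebra.counit (R := k) (A := A ⊗[k] C))
  eps_one : Coalgebra.counit (R := k) (A := A ⊗[k] C) ((1 : A) ⊗ₜ eC) = 1

/-- `A_{W}^{ρ} ⋈_R^σ C` is a cross product bialgebra: the crossed product algebra
`A ⊗_{R,σ} C` together with the crossed coproduct coalgebra `A_{W,ρ} ⊗ C`
form a bialgebra. -/
structure IsCrossBialgebra (eC : C) (R : C ⊗[k] A →ₗ[k] A ⊗[k] C)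
    (σ : C ⊗[k] C →ₗ[k] A ⊗[k] C) (W : A ⊗[k] C →ₗ[k] C ⊗[k] A)
    (ρ : A ⊗[k] C →ₗ[k] A ⊗[k] A) : Prop where
  brz : IsBrzezinski k eC R σ
  cobrz : IsCoBrzezinski k (Coalgebra.counit (R := k) (A := A)) W ρ
  delta_mul : DeltaIsMulMap k (brzMul k R σ) (coDelta k W ρ)
  delta_one : coDelta k W ρ ((1 : A) ⊗ₜ eC) = ((1 : A) ⊗ₜ eC) ⊗ₜ[k] ((1 : A) ⊗ₜ eC)
  eps_mul : EpsIsMulMap k (brzMul k R σ) (coEps k (Coalgebra.counit (R := k) (A := A)))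
  eps_one : coEps k (Coalgebra.counit (R := k) (A := A)) ((1 : A) ⊗ₜ eC) = 1

/-- The right `C`-coaction `a ⊗ c ↦ (a ⊗ c₁) ⊗ c₂` on `A ⊗ C`. -/
def coactC : A ⊗[k] C →ₗ[k] (A ⊗[k] C) ⊗[k] C :=
  (TensorProduct.assoc k A C C).symm.toLinearMap ∘ₗ lTensor A comul

/-- The counit condition (extra1) for a map `θ : C → A ⊗ C`. -/
def CounitCond (θ : C →ₗ[k] A ⊗[k] C) : Prop :=
  (TensorProduct.lid k k).toLinearMap
      ∘ₗ TensorProduct.map (Coalgebra.counit (R := k) (A := A)) counit ∘ₗ θ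
    = (counit : C →ₗ[k] k)

/-- The right `C`-comodule condition (extra2)/(extra3) for a map `θ : C → A ⊗ C`. -/
def ComodCond (θ : C →ₗ[k] A ⊗[k] C) : Prop :=
  lTensor A comul ∘ₗ θ
    = (TensorProduct.assoc k A C C).toLinearMap ∘ₗ rTensor C θ ∘ₗ comul

/-- The map `c ↦ ε_A(c_{<-1>}) c_{<0>}`. -/
def epsFirst (θ : C →ₗ[k] A ⊗[k] C) : C →ₗ[k] C :=
  (TensorProduct.lid k C).toLinearMap
    ∘ₗ rTensor C (Coalgebra.counit (R := k) (A := A)) ∘ₗ θ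

/-- The map `W'` built from `(θ, γ)`; `h` is applied to the first output factor
(`h = id` for formula (Wprimnou), `h = epsFirst γ` for formula (Wprim)). -/
def Wtw (θ γ : C →ₗ[k] A ⊗[k] C) (h : C →ₗ[k] C) : A ⊗[k] C →ₗ[k] C ⊗[k] A :=
  lTensor C (mul' k A) ∘ₗ (TensorProduct.assoc k C A A).toLinearMap
    ∘ₗ rTensor A (TensorProduct.comm k A C).toLinearMap
    ∘ₗ (TensorProduct.assoc k A C A).symm.toLinearMap
    ∘ₗ rTensor (C ⊗[k] A) (mul' k A)
    ∘ₗ (TensorProduct.assoc k A A (C ⊗[k] A)).symm.toLinearMap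
    ∘ₗ lTensor A (lTensor A (TensorProduct.map h (g0 k A C ∘ₗ γ) ∘ₗ comul) ∘ₗ θ)

/-- Componentwise multiplication `(A ⊗ A) ⊗ (A ⊗ A) → A ⊗ A` (with the middle flip). -/
def mulPair : (A ⊗[k] A) ⊗[k] (A ⊗[k] A) →ₗ[k] A ⊗[k] A :=
  TensorProduct.map (mul' k A) (mul' k A) ∘ₗ (tensorTensorTensorComm k A A A A).toLinearMap

/-- The map `c ↦ c_{{-1}} ⊗ ε_C(c_{{0}}_{{0}}) c_{{0}}_{{-1}}`. -/
def lamAux (γ : C →ₗ[k] A ⊗[k] C) : C →ₗ[k] A ⊗[k] A :=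
  lTensor A (g0 k A C ∘ₗ γ) ∘ₗ γ

/-- The map `κ` appearing in the formula (rhoprim). -/
def kapAux (θ γ : C →ₗ[k] A ⊗[k] C) : C →ₗ[k] A ⊗[k] A :=
  mulPair k ∘ₗ TensorProduct.map comul (lamAux k γ) ∘ₗ θ

/-- The map `ρ'` of formula (rhoprim). -/
def ρtw (θ γ : C →ₗ[k] A ⊗[k] C) : A ⊗[k] C →ₗ[k] A ⊗[k] A :=
  mulPair k ∘ₗ TensorProduct.map comul (kapAux k θ γ)

/-- Auxiliary map for the explicit formula (deltaprim). -/
def eAux (θ γ : C →ₗ[k] A ⊗[k] C) : C →ₗ[k] (A ⊗[k] C) ⊗[k] A :=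
  (TensorProduct.assoc k A C A).symm.toLinearMap
    ∘ₗ lTensor A (TensorProduct.comm k A C).toLinearMap
    ∘ₗ TensorProduct.map (mul' k A) LinearMap.id
    ∘ₗ (tensorTensorTensorComm k A A A C).toLinearMap
    ∘ₗ TensorProduct.map comul γ ∘ₗ θ

/-- Auxiliary map for the explicit formula (deltaprim). -/
def dAux (θ γ : C →ₗ[k] A ⊗[k] C) : C →ₗ[k] (A ⊗[k] C) ⊗[k] (A ⊗[k] C) :=
  lTensor (A ⊗[k] C) (muls2 k A C)
    ∘ₗ (TensorProduct.assoc k (A ⊗[k] C) A (A ⊗[k] C)).toLinearMap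
    ∘ₗ TensorProduct.map (eAux k θ γ) γ ∘ₗ comul

/-- The explicit formula (deltaprim) for the comultiplication `Δ'`. -/
def deltaExplicit (θ γ : C →ₗ[k] A ⊗[k] C) :
    A ⊗[k] C →ₗ[k] (A ⊗[k] C) ⊗[k] (A ⊗[k] C) :=
  TensorProduct.map (muls2 k A C) (muls2 k A C)
    ∘ₗ (tensorTensorTensorComm k A A (A ⊗[k] C) (A ⊗[k] C)).toLinearMap
    ∘ₗ TensorProduct.map comul (dAux k θ γ)

/-- The conditions (cros1)--(cros4) and (extra1)--(extra3) on `(θ, γ)`. -/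
def TwistConditions (eC : C) (R : C ⊗[k] A →ₗ[k] A ⊗[k] C)
    (σ : C ⊗[k] C →ₗ[k] A ⊗[k] C) (θ γ : C →ₗ[k] A ⊗[k] C) : Prop :=
  Cros123 k eC θ γ ∧ Cros4 k R σ γ (σtw k R σ θ γ) ∧
  CounitCond k θ ∧ CounitCond k γ ∧ ComodCond k θ ∧ ComodCond k γ

/-- Equivalence of cross product bialgebras: a linear isomorphism which is a morphism of
bialgebras, of left `A`-modules and of right `C`-comodules; the target is the cross product
bialgebra `A_{W₀}^{ρ₀} ⋈_R^σ C` (with tensor product coalgebra structure), the source is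
`A_{W'}^{ρ'} ⋈_{R'}^{σ'} C`. -/
def CrossEquiv (eC : C) (R : C ⊗[k] A →ₗ[k] A ⊗[k] C) (σ : C ⊗[k] C →ₗ[k] A ⊗[k] C)
    (R' : C ⊗[k] A →ₗ[k] A ⊗[k] C) (σ' : C ⊗[k] C →ₗ[k] A ⊗[k] C)
    (W' : A ⊗[k] C →ₗ[k] C ⊗[k] A) (ρ' : A ⊗[k] C →ₗ[k] A ⊗[k] A) : Prop :=
  ∃ φ : (A ⊗[k] C) ≃ₗ[k] A ⊗[k] C,
    (∀ x y : A ⊗[k] C, φ (brzMul k R' σ' (x ⊗ₜ y)) = brzMul k R σ (φ x ⊗ₜ φ y)) ∧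
    φ ((1 : A) ⊗ₜ eC) = (1 : A) ⊗ₜ eC ∧
    TensorProduct.map φ.toLinearMap φ.toLinearMap ∘ₗ coDelta k W' ρ'
      = Coalgebra.comul (R := k) (A := A ⊗[k] C) ∘ₗ φ.toLinearMap ∧
    Coalgebra.counit (R := k) (A := A ⊗[k] C) ∘ₗ φ.toLinearMap
      = coEps k (Coalgebra.counit (R := k) (A := A)) ∧
    (∀ (a : A) (x : A ⊗[k] C), φ (muls2 k A C (a ⊗ₜ x)) = muls2 k A C (a ⊗ₜ φ x)) ∧
    rTensor C φ.toLinearMap ∘ₗ coactC k = coactC k ∘ₗ φ.toLinearMap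

end BialgebraSide


section Drinfeld

variable (H : Type u) [Ring H] [HopfAlgebra k H]

/-- Convolution product on `H* = Dual k H`: `(p * q)(h) = p(h₁) q(h₂)`. -/
def conv : Module.Dual k H ⊗[k] Module.Dual k H →ₗ[k] Module.Dual k H :=
  (Coalgebra.comul (R := k) (A := H)).dualMap ∘ₗ TensorProduct.dualDistrib k H H

/-- The left regular action `h ⊗ p ↦ h ⇀ p`, `(h ⇀ p)(h') = p(h'h)`. -/
def lact : H ⊗[k] Module.Dual k H →ₗ[k] Module.Dual k H :=
  TensorProduct.lift ((lcomp k (Module.Dual k H) ((LinearMap.mul k H).flip)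
    ∘ₗ llcomp k H H k).flip)

/-- The right regular action `p ⊗ h ↦ p ↼ h`, `(p ↼ h)(h') = p(hh')`. -/
def ract : Module.Dual k H ⊗[k] H →ₗ[k] Module.Dual k H :=
  TensorProduct.lift (lcomp k (Module.Dual k H) (LinearMap.mul k H)
    ∘ₗ llcomp k H H k)

/-- The map `h ⊗ p ↦ (h₁ ⇀ p ↼ S⁻¹(h₃)) ⊗ h₂`, where `Sinv` plays the role of `S⁻¹`. -/
def dPhi (Sinv : H →ₗ[k] H) :
    H ⊗[k] Module.Dual k H →ₗ[k] Module.Dual k H ⊗[k] H :=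
  rTensor H (lact k H)
    ∘ₗ (TensorProduct.assoc k H (Module.Dual k H) H).symm.toLinearMap
    ∘ₗ lTensor H (TensorProduct.comm k H (Module.Dual k H)).toLinearMap
    ∘ₗ lTensor H (lTensor H (ract k H
        ∘ₗ (TensorProduct.comm k H (Module.Dual k H)).toLinearMap
        ∘ₗ rTensor (Module.Dual k H) Sinv))
    ∘ₗ lTensor H (TensorProduct.assoc k H H (Module.Dual k H)).toLinearMap
    ∘ₗ (TensorProduct.assoc k H (H ⊗[k] H) (Module.Dual k H)).toLinearMap
    ∘ₗ rTensor (Module.Dual k H) (lTensor H comul ∘ₗ comul)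

/-- The multiplication of the Drinfeld double:
`(p ⊗ h)(p' ⊗ h') = p (h₁ ⇀ p' ↼ S⁻¹(h₃)) ⊗ h₂ h'`. -/
def dMul (Sinv : H →ₗ[k] H) :
    (Module.Dual k H ⊗[k] H) ⊗[k] (Module.Dual k H ⊗[k] H) →ₗ[k]
      Module.Dual k H ⊗[k] H :=
  rTensor H (conv k H)
    ∘ₗ (TensorProduct.assoc k (Module.Dual k H) (Module.Dual k H) H).symm.toLinearMap
    ∘ₗ lTensor (Module.Dual k H)
        (lTensor (Module.Dual k H) (mul' k H)
          ∘ₗ (TensorProduct.assoc k (Module.Dual k H) H H).toLinearMap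
          ∘ₗ rTensor H (dPhi k H Sinv)
          ∘ₗ (TensorProduct.assoc k H (Module.Dual k H) H).symm.toLinearMap)
    ∘ₗ (TensorProduct.assoc k (Module.Dual k H) H
          (Module.Dual k H ⊗[k] H)).toLinearMap

/-- The comultiplication of `H*`, dual to the multiplication of `H` (finite dimensional). -/
def comulD [FiniteDimensional k H] :
    Module.Dual k H →ₗ[k] Module.Dual k H ⊗[k] Module.Dual k H :=
  (TensorProduct.dualDistribEquiv k H H).symm.toLinearMap ∘ₗ (mul' k H).dualMap

/-- The comultiplication of `H^{*cop}`. -/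
def comulDcop [FiniteDimensional k H] :
    Module.Dual k H →ₗ[k] Module.Dual k H ⊗[k] Module.Dual k H :=
  (TensorProduct.comm k (Module.Dual k H) (Module.Dual k H)).toLinearMap ∘ₗ comulD k H

/-- The counit of `H*`: evaluation at `1`. -/
def counitD : Module.Dual k H →ₗ[k] k := Module.Dual.eval k H 1

/-- The comultiplication of the tensor product coalgebra `H^{*cop} ⊗ H`. -/
def deltaD [FiniteDimensional k H] :
    Module.Dual k H ⊗[k] H →ₗ[k]
      (Module.Dual k H ⊗[k] H) ⊗[k] (Module.Dual k H ⊗[k] H) :=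
  (tensorTensorTensorComm k (Module.Dual k H) (Module.Dual k H) H H).toLinearMap
    ∘ₗ TensorProduct.map (comulDcop k H) comul

/-- The counit of the tensor product coalgebra `H^{*cop} ⊗ H`. -/
def epsD : Module.Dual k H ⊗[k] H →ₗ[k] k :=
  (TensorProduct.lid k k).toLinearMap
    ∘ₗ TensorProduct.map (counitD k H) (Coalgebra.counit (R := k) (A := H))

/-- The left `H^{*cop}`-coaction on `H^{*cop} ⊗ H`: `p ⊗ h ↦ p₂ ⊗ (p₁ ⊗ h)`. -/
def coactD [FiniteDimensional k H] :
    Module.Dual k H ⊗[k] H →ₗ[k]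
      Module.Dual k H ⊗[k] (Module.Dual k H ⊗[k] H) :=
  (TensorProduct.assoc k (Module.Dual k H) (Module.Dual k H) H).toLinearMap
    ∘ₗ rTensor H (comulDcop k H)

/-- `r₁₂ ∈ H ⊗ (H ⊗ H)` for `r ∈ H ⊗ H`. -/
def r12 (r : H ⊗[k] H) : H ⊗[k] (H ⊗[k] H) :=
  lTensor H ((TensorProduct.mk k H H).flip 1) r

/-- `r₁₃ ∈ H ⊗ (H ⊗ H)` for `r ∈ H ⊗ H`. -/
def r13 (r : H ⊗[k] H) : H ⊗[k] (H ⊗[k] H) :=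
  lTensor H (TensorProduct.mk k H H 1) r

/-- `r₂₃ ∈ H ⊗ (H ⊗ H)` for `r ∈ H ⊗ H`. -/
def r23 (r : H ⊗[k] H) : H ⊗[k] (H ⊗[k] H) := (1 : H) ⊗ₜ r

/-- `r` is a quasitriangular structure on `H`. -/
structure IsQuasitriangular (r : H ⊗[k] H) : Prop where
  qt1 : (TensorProduct.assoc k H H H) (rTensor H comul r) = r13 k H r * r23 k H r
  qt2 : lTensor H comul r = r13 k H r * r12 k H r
  qt3 : ∀ h : H, (TensorProduct.comm k H H) (comul h) * r = r * comul h
  qt4l : (TensorProduct.lid k H)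
      (rTensor H (Coalgebra.counit (R := k) (A := H)) r) = 1
  qt4r : (TensorProduct.rid k H)
      (lTensor H (Coalgebra.counit (R := k) (A := H)) r) = 1

/-- Majid's map `φ(p ⊗ h) = (p ↼ S⁻¹(r¹)) ⊗ r² h`. -/
def phiMajid (r : H ⊗[k] H) (Sinv : H →ₗ[k] H) :
    Module.Dual k H ⊗[k] H →ₗ[k] Module.Dual k H ⊗[k] H :=
  TensorProduct.map (ract k H ∘ₗ lTensor (Module.Dual k H) Sinv)
      (mul' k H ∘ₗ (TensorProduct.comm k H H).toLinearMap)
    ∘ₗ (tensorTensorTensorComm k (Module.Dual k H) H H H).toLinearMap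
    ∘ₗ (TensorProduct.mk k (Module.Dual k H ⊗[k] H) (H ⊗[k] H)).flip r

end Drinfeld

end Paper

/-!
Write `x * y` for `brzMul k R σ (x ⊗ₜ y)`. This product is left `A`-linear, and right
multiplication by `b ⊗ 1_V`, by `1_A ⊗ w` and left multiplication by `1_A ⊗ v` are explicit
maps in terms of `R` and `σ`; in these terms (1.3)--(1.5) are associativity on generators,
which gives associativity of `*`. Conversely, under the unit axioms `R(v ⊗ a) = (1 ⊗ v)(a ⊗ 1)`
and `σ(v ⊗ w) = (1 ⊗ v)(1 ⊗ w)`, so associativity of `*` gives back (1.3)--(1.5).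

By (cros3) `φ` is a left `A`-linear bijection with inverse `a ⊗ v ↦ a γ(v)`, and unfolding `R'`
and `σ'` gives `φ(x *' y) = φ x * φ y`. Thus `*'` is `*` transported along `φ`; it is
associative, and `(R', σ')` is a crossed product datum by the converse above.
-/

universe u

namespace Paper

variable {k A V : Type u} [Field k] [Ring A] [Algebra k A] [AddCommGroup V] [Module k V]

@[simp] lemma muls2_tmul (a : A) (z : A ⊗[k] V) : muls2 k A V (a ⊗ₜ z) = a • z := by
  induction z using TensorProduct.induction_on with
  | zero => simp
  | tmul b v => simp [muls2, smul_tmul']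
  | add x y hx hy => simp [tmul_add, hx, hy]

@[simp] lemma muls3_tmul (a : A) (z : A ⊗[k] (A ⊗[k] V)) :
    muls3 k A V (a ⊗ₜ z) = a • muls2 k A V z := by
  simp [muls3]

section Extension

/- `φtw k g` is the left `A`-linear extension `a ⊗ v ↦ a g(v)` of an arbitrary
`g : V → A ⊗ V`, not only of `θ`. -/

@[simp] lemma φtw_tmul (g : V →ₗ[k] A ⊗[k] V) (a : A) (v : V) :
    φtw k g (a ⊗ₜ v) = a • g v := by
  simp [φtw]

lemma muls2_lTensor (g : V →ₗ[k] A ⊗[k] V) (z : A ⊗[k] V) :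
    muls2 k A V (lTensor A g z) = φtw k g z :=
  rfl

lemma φtw_smul (g : V →ₗ[k] A ⊗[k] V) (a : A) (z : A ⊗[k] V) :
    φtw k g (a • z) = a • φtw k g z := by
  induction z using TensorProduct.induction_on with
  | zero => simp
  | tmul b v => simp [smul_tmul', mul_smul]
  | add x y hx hy => simp [hx, hy]

lemma φtw_φtw (f g : V →ₗ[k] A ⊗[k] V) (z : A ⊗[k] V) :
    φtw k g (φtw k f z) = φtw k (φtw k g ∘ₗ f) z := by
  induction z using TensorProduct.induction_on with
  | zero => simp
  | tmul a v => simp [φtw_smul]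
  | add x y hx hy => simp [hx, hy]

lemma φtw_φtw_of_comp_eq {f g : V →ₗ[k] A ⊗[k] V}
    (hgf : muls2 k A V ∘ₗ lTensor A g ∘ₗ f = TensorProduct.mk k A V 1) (z : A ⊗[k] V) :
    φtw k g (φtw k f z) = z := by
  have hid : φtw k (TensorProduct.mk k A V 1) z = z := by
    induction z using TensorProduct.induction_on with
    | zero => simp
    | tmul a v => simp [smul_tmul']
    | add x y hx hy => simp [hx, hy]
  rwa [φtw_φtw, show φtw k g ∘ₗ f = TensorProduct.mk k A V 1 from hgf]

lemma φtw_bijective {θ γ : V →ₗ[k] A ⊗[k] V}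
    (hγθ : muls2 k A V ∘ₗ lTensor A γ ∘ₗ θ = TensorProduct.mk k A V 1)
    (hθγ : muls2 k A V ∘ₗ lTensor A θ ∘ₗ γ = TensorProduct.mk k A V 1) :
    Function.Bijective (φtw k θ) :=
  ⟨Function.LeftInverse.injective (φtw_φtw_of_comp_eq hγθ),
    Function.RightInverse.surjective (φtw_φtw_of_comp_eq hθγ)⟩

end Extension

section StructureMaps

variable (R : V ⊗[k] A →ₗ[k] A ⊗[k] V) (σ : V ⊗[k] V →ₗ[k] A ⊗[k] V)

/- In `A ⊗_{R,σ} V` these are right multiplication by `b ⊗ 1_V` and by `1_A ⊗ w`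
(once the unit axioms hold), and left multiplication by `1_A ⊗ v`. -/

def mulARight (b : A) : A ⊗[k] V →ₗ[k] A ⊗[k] V :=
  φtw k (R ∘ₗ (TensorProduct.mk k V A).flip b)

def mulVRight (w : V) : A ⊗[k] V →ₗ[k] A ⊗[k] V :=
  φtw k (σ ∘ₗ (TensorProduct.mk k V V).flip w)

def mulVLeft (v : V) : A ⊗[k] V →ₗ[k] A ⊗[k] V :=
  brzMul k R σ ∘ₗ TensorProduct.mk k (A ⊗[k] V) (A ⊗[k] V) ((1 : A) ⊗ₜ v)

variable {R σ}

@[simp] lemma mulARight_tmul (b d : A) (x : V) :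
    mulARight R b (d ⊗ₜ x) = d • R (x ⊗ₜ b) := by
  simp [mulARight]

@[simp] lemma mulVRight_tmul (w : V) (d : A) (x : V) :
    mulVRight σ w (d ⊗ₜ x) = d • σ (x ⊗ₜ w) := by
  simp [mulVRight]

lemma mulARight_eq_muls2 (b : A) (z : A ⊗[k] V) :
    mulARight R b z = muls2 k A V (lTensor A R (TensorProduct.assoc k A V A (z ⊗ₜ b))) := by
  induction z using TensorProduct.induction_on with
  | zero => simp
  | tmul d x => simp
  | add x y hx hy => simp [add_tmul, hx, hy]

lemma mulVRight_eq_muls2 (w : V) (z : A ⊗[k] V) :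
    mulVRight σ w z = muls2 k A V (lTensor A σ (TensorProduct.assoc k A V V (z ⊗ₜ w))) := by
  induction z using TensorProduct.induction_on with
  | zero => simp
  | tmul d x => simp
  | add x y hx hy => simp [add_tmul, hx, hy]

lemma mulVLeft_eq_muls2 (v : V) (z : A ⊗[k] V) :
    mulVLeft R σ v z = muls2 k A V (lTensor A σ (TensorProduct.assoc k A V V
      (rTensor V R ((TensorProduct.assoc k V A V).symm (v ⊗ₜ z))))) := by
  simp [mulVLeft, brzMul]

lemma mulARight_smul (b a : A) (z : A ⊗[k] V) :
    mulARight R b (a • z) = a • mulARight R b z :=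
  φtw_smul _ a z

lemma mulVRight_smul (w : V) (a : A) (z : A ⊗[k] V) :
    mulVRight σ w (a • z) = a • mulVRight σ w z :=
  φtw_smul _ a z

lemma brzMul_tmul_left (a : A) (v : V) (y : A ⊗[k] V) :
    brzMul k R σ ((a ⊗ₜ v) ⊗ₜ y) = a • mulVLeft R σ v y := by
  simp [mulVLeft, brzMul]

@[simp] lemma mulVLeft_tmul (v w : V) (b : A) :
    mulVLeft R σ v (b ⊗ₜ w) = mulVRight σ w (R (v ⊗ₜ b)) := by
  simp [mulVLeft_eq_muls2, mulVRight_eq_muls2]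

end StructureMaps

section Units

variable {R : V ⊗[k] A →ₗ[k] A ⊗[k] V} {σ : V ⊗[k] V →ₗ[k] A ⊗[k] V} {e : V}

lemma mulVRight_unit (hσr : ∀ v : V, σ (v ⊗ₜ e) = (1 : A) ⊗ₜ v) (z : A ⊗[k] V) :
    mulVRight σ e z = z := by
  induction z using TensorProduct.induction_on with
  | zero => simp
  | tmul b x => simp [hσr, smul_tmul']
  | add x y hx hy => simp [hx, hy]

lemma mulARight_one (hRr : ∀ v : V, R (v ⊗ₜ (1 : A)) = (1 : A) ⊗ₜ v) (z : A ⊗[k] V) :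
    mulARight R 1 z = z := by
  induction z using TensorProduct.induction_on with
  | zero => simp
  | tmul a v => simp [hRr, smul_tmul']
  | add x y hx hy => simp [hx, hy]

lemma mulVLeft_unit (hRl : ∀ a : A, R (e ⊗ₜ a) = a ⊗ₜ e)
    (hσl : ∀ v : V, σ (e ⊗ₜ v) = (1 : A) ⊗ₜ v) (z : A ⊗[k] V) :
    mulVLeft R σ e z = z := by
  induction z using TensorProduct.induction_on with
  | zero => simp
  | tmul b w => simp [hRl, hσl, smul_tmul']
  | add x y hx hy => simp [hx, hy]

lemma brzMul_tmul_unit (hσr : ∀ v : V, σ (v ⊗ₜ e) = (1 : A) ⊗ₜ v) (z : A ⊗[k] V) (b : A) :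
    brzMul k R σ (z ⊗ₜ (b ⊗ₜ e)) = mulARight R b z := by
  induction z using TensorProduct.induction_on with
  | zero => simp
  | tmul d x => simp [brzMul_tmul_left, mulVRight_unit hσr]
  | add x y hx hy => simp [add_tmul, hx, hy]

lemma brzMul_one_tmul (hRr : ∀ v : V, R (v ⊗ₜ (1 : A)) = (1 : A) ⊗ₜ v)
    (z : A ⊗[k] V) (w : V) :
    brzMul k R σ (z ⊗ₜ ((1 : A) ⊗ₜ w)) = mulVRight σ w z := by
  induction z using TensorProduct.induction_on with
  | zero => simp
  | tmul d x => simp [brzMul_tmul_left, hRr]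
  | add x y hx hy => simp [add_tmul, hx, hy]

end Units

section Axioms

variable {R : V ⊗[k] A →ₗ[k] A ⊗[k] V} {σ : V ⊗[k] V →ₗ[k] A ⊗[k] V} {e : V}

lemma IsBrzezinski.R_mul (h : IsBrzezinski k e R σ) (v : V) (a b : A) :
    R (v ⊗ₜ (a * b)) = mulARight R b (R (v ⊗ₜ a)) := by
  simpa [muls2, mulARight_eq_muls2] using LinearMap.congr_fun h.brz3 (v ⊗ₜ (a ⊗ₜ b))

lemma IsBrzezinski.mulVLeft_σ (h : IsBrzezinski k e R σ) (v w u : V) :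
    mulVLeft R σ v (σ (w ⊗ₜ u)) = mulVRight σ u (σ (v ⊗ₜ w)) := by
  simpa [mulVLeft_eq_muls2, mulVRight_eq_muls2] using LinearMap.congr_fun h.brz4 (v ⊗ₜ (w ⊗ₜ u))

lemma IsBrzezinski.mulVLeft_R (h : IsBrzezinski k e R σ) (v w : V) (a : A) :
    mulVLeft R σ v (R (w ⊗ₜ a)) = mulARight R a (σ (v ⊗ₜ w)) := by
  simpa [mulVLeft_eq_muls2, mulARight_eq_muls2] using LinearMap.congr_fun h.brz5 (v ⊗ₜ (w ⊗ₜ a))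

lemma IsBrzezinski.of_apply (hRl : ∀ a : A, R (e ⊗ₜ a) = a ⊗ₜ e)
    (hRr : ∀ v : V, R (v ⊗ₜ (1 : A)) = (1 : A) ⊗ₜ v)
    (hσl : ∀ v : V, σ (e ⊗ₜ v) = (1 : A) ⊗ₜ v) (hσr : ∀ v : V, σ (v ⊗ₜ e) = (1 : A) ⊗ₜ v)
    (hR_mul : ∀ (v : V) (a b : A), R (v ⊗ₜ (a * b)) = mulARight R b (R (v ⊗ₜ a)))
    (hσσ : ∀ v w u : V, mulVLeft R σ v (σ (w ⊗ₜ u)) = mulVRight σ u (σ (v ⊗ₜ w)))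
    (hσR : ∀ (v w : V) (a : A), mulVLeft R σ v (R (w ⊗ₜ a)) = mulARight R a (σ (v ⊗ₜ w))) :
    IsBrzezinski k e R σ where
  unit_R_left := hRl
  unit_R_right := hRr
  unit_σ_left := hσl
  unit_σ_right := hσr
  brz3 := ext_threefold' fun v a b => by simpa [muls2, mulARight_eq_muls2] using hR_mul v a b
  brz4 := ext_threefold' fun v w u => by
    simpa [mulVLeft_eq_muls2, mulVRight_eq_muls2] using hσσ v w u
  brz5 := ext_threefold' fun v w a => by
    simpa [mulVLeft_eq_muls2, mulARight_eq_muls2] using hσR v w a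

end Axioms

section Associativity

variable {R : V ⊗[k] A →ₗ[k] A ⊗[k] V} {σ : V ⊗[k] V →ₗ[k] A ⊗[k] V}

lemma brzMul_smul_left (a : A) (x y : A ⊗[k] V) :
    brzMul k R σ ((a • x) ⊗ₜ y) = a • brzMul k R σ (x ⊗ₜ y) := by
  induction x using TensorProduct.induction_on with
  | zero => simp
  | tmul b v => simp [smul_tmul', brzMul_tmul_left, mul_smul]
  | add x y hx hy => simp [add_tmul, hx, hy]

lemma brzMul_tmul_right (z : A ⊗[k] V) (c : A) (u : V) :
    brzMul k R σ (z ⊗ₜ (c ⊗ₜ u)) = mulVRight σ u (mulARight R c z) := by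
  induction z using TensorProduct.induction_on with
  | zero => simp
  | tmul d x => simp [brzMul_tmul_left, mulVRight_smul]
  | add x y hx hy => simp [add_tmul, hx, hy]

variable {e : V} (h : IsBrzezinski k e R σ)
include h

lemma IsBrzezinski.mulVLeft_smul (v : V) (b : A) (y : A ⊗[k] V) :
    mulVLeft R σ v (b • y) = brzMul k R σ (R (v ⊗ₜ b) ⊗ₜ y) := by
  induction y using TensorProduct.induction_on with
  | zero => simp
  | tmul c u => rw [smul_tmul', smul_eq_mul, mulVLeft_tmul, h.R_mul, brzMul_tmul_right]
  | add x y hx hy => simp [tmul_add, hx, hy]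

lemma IsBrzezinski.brzMul_σ_right (z : A ⊗[k] V) (w u : V) :
    brzMul k R σ (z ⊗ₜ σ (w ⊗ₜ u)) = mulVRight σ u (mulVRight σ w z) := by
  induction z using TensorProduct.induction_on with
  | zero => simp
  | tmul d y => simp [brzMul_tmul_left, h.mulVLeft_σ, mulVRight_smul]
  | add x y hx hy => simp [add_tmul, hx, hy]

lemma IsBrzezinski.mulVLeft_mulVRight (v u : V) (y : A ⊗[k] V) :
    mulVLeft R σ v (mulVRight σ u y) = mulVRight σ u (mulVLeft R σ v y) := by
  induction y using TensorProduct.induction_on with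
  | zero => simp
  | tmul c w => simp [h.mulVLeft_smul, h.brzMul_σ_right]
  | add p q hp hq => simp [hp, hq]

lemma IsBrzezinski.brzMul_σ_left (v w : V) (z : A ⊗[k] V) :
    brzMul k R σ (σ (v ⊗ₜ w) ⊗ₜ z) = mulVLeft R σ v (mulVLeft R σ w z) := by
  induction z using TensorProduct.induction_on with
  | zero => simp
  | tmul c u => simp [brzMul_tmul_right, ← h.mulVLeft_R, h.mulVLeft_mulVRight]
  | add p q hp hq => simp [tmul_add, hp, hq]

lemma IsBrzezinski.brzMul_mulVRight_left (w : V) (y z : A ⊗[k] V) :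
    brzMul k R σ (mulVRight σ w y ⊗ₜ z) = brzMul k R σ (y ⊗ₜ mulVLeft R σ w z) := by
  induction y using TensorProduct.induction_on with
  | zero => simp
  | tmul d x => simp [brzMul_smul_left, h.brzMul_σ_left, brzMul_tmul_left]
  | add p q hp hq => simp [add_tmul, hp, hq]

theorem IsBrzezinski.brzMul_assoc (x y z : A ⊗[k] V) :
    brzMul k R σ (brzMul k R σ (x ⊗ₜ y) ⊗ₜ z)
      = brzMul k R σ (x ⊗ₜ brzMul k R σ (y ⊗ₜ z)) := by
  induction x using TensorProduct.induction_on with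
  | zero => simp
  | tmul a v =>
      induction y using TensorProduct.induction_on with
      | zero => simp
      | tmul b w =>
          simp [brzMul_tmul_left, brzMul_smul_left, h.brzMul_mulVRight_left, h.mulVLeft_smul]
      | add p q hp hq => simp [add_tmul, tmul_add, hp, hq]
  | add p q hp hq => simp [add_tmul, hp, hq]

end Associativity

section Converse

variable {R : V ⊗[k] A →ₗ[k] A ⊗[k] V} {σ : V ⊗[k] V →ₗ[k] A ⊗[k] V} {e : V}

lemma R_eq_brzMul (hσr : ∀ v : V, σ (v ⊗ₜ e) = (1 : A) ⊗ₜ v) (v : V) (a : A) :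
    R (v ⊗ₜ a) = brzMul k R σ (((1 : A) ⊗ₜ v) ⊗ₜ (a ⊗ₜ e)) := by
  simp [brzMul_tmul_unit hσr]

lemma σ_eq_brzMul (hRr : ∀ v : V, R (v ⊗ₜ (1 : A)) = (1 : A) ⊗ₜ v) (v w : V) :
    σ (v ⊗ₜ w) = brzMul k R σ (((1 : A) ⊗ₜ v) ⊗ₜ ((1 : A) ⊗ₜ w)) := by
  simp [brzMul_one_tmul hRr]

theorem IsBrzezinski.of_brzMul_assoc (hRl : ∀ a : A, R (e ⊗ₜ a) = a ⊗ₜ e)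
    (hRr : ∀ v : V, R (v ⊗ₜ (1 : A)) = (1 : A) ⊗ₜ v)
    (hσl : ∀ v : V, σ (e ⊗ₜ v) = (1 : A) ⊗ₜ v) (hσr : ∀ v : V, σ (v ⊗ₜ e) = (1 : A) ⊗ₜ v)
    (hassoc : ∀ x y z : A ⊗[k] V, brzMul k R σ (brzMul k R σ (x ⊗ₜ y) ⊗ₜ z)
      = brzMul k R σ (x ⊗ₜ brzMul k R σ (y ⊗ₜ z))) :
    IsBrzezinski k e R σ := by
  refine .of_apply hRl hRr hσl hσr (fun v a b => ?_) (fun v w u => ?_) (fun v w a => ?_)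
  · have hab : (a * b) ⊗ₜ e = brzMul k R σ ((a ⊗ₜ e) ⊗ₜ (b ⊗ₜ e)) := by
      simp [brzMul_tmul_left, mulVLeft_unit hRl hσl, smul_tmul']
    rw [R_eq_brzMul hσr, hab, ← hassoc, ← R_eq_brzMul hσr, brzMul_tmul_unit hσr]
  · rw [σ_eq_brzMul hRr w u]
    change brzMul k R σ (_ ⊗ₜ brzMul k R σ _) = _
    rw [← hassoc, ← σ_eq_brzMul hRr, brzMul_one_tmul hRr]
  · rw [R_eq_brzMul hσr w a]
    change brzMul k R σ (_ ⊗ₜ brzMul k R σ _) = _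
    rw [← hassoc, ← σ_eq_brzMul hRr, brzMul_tmul_unit hσr]

end Converse

section Twisting

variable {R : V ⊗[k] A →ₗ[k] A ⊗[k] V} {σ : V ⊗[k] V →ₗ[k] A ⊗[k] V}
  {θ γ : V →ₗ[k] A ⊗[k] V}

lemma Rtw_tmul (v : V) (a : A) : Rtw k R θ γ (v ⊗ₜ a) = φtw k γ (mulARight R a (θ v)) := by
  simp only [Rtw, coe_comp, Function.comp_apply, LinearEquiv.coe_coe, rTensor_tmul]
  induction θ v using TensorProduct.induction_on with
  | zero => simp
  | tmul d x => simp [φtw_smul, muls2_lTensor]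
  | add x y hx hy => simp [add_tmul, hx, hy]

lemma σtw_tmul (v w : V) :
    σtw k R σ θ γ (v ⊗ₜ w) = φtw k γ (brzMul k R σ (θ v ⊗ₜ θ w)) := by
  simp only [σtw, coe_comp, Function.comp_apply, LinearEquiv.coe_coe, TensorProduct.map_tmul]
  generalize θ w = y
  induction θ v using TensorProduct.induction_on with
  | zero => simp
  | tmul d x =>
      induction y using TensorProduct.induction_on with
      | zero => simp
      | tmul b u => simp [φtw_smul, muls2_lTensor, brzMul_tmul_left, mulVRight_eq_muls2]
      | add p q hp hq => simp only [tmul_add, map_add, hp, hq]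
  | add x y hx hy => simp only [add_tmul, map_add, hx, hy]

lemma mulVRight_σtw (w : V) (z : A ⊗[k] V) :
    mulVRight (σtw k R σ θ γ) w z = φtw k γ (brzMul k R σ (φtw k θ z ⊗ₜ θ w)) := by
  induction z using TensorProduct.induction_on with
  | zero => simp
  | tmul a v => simp [σtw_tmul, φtw_smul, brzMul_smul_left]
  | add x y hx hy => simp [add_tmul, hx, hy]

variable {e : V} (h : IsBrzezinski k e R σ)
include h

lemma IsBrzezinski.brzMul_smul_right (x y : A ⊗[k] V) (b : A) :
    brzMul k R σ (x ⊗ₜ (b • y)) = brzMul k R σ (mulARight R b x ⊗ₜ y) := by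
  have hb : b • y = brzMul k R σ ((b ⊗ₜ e) ⊗ₜ y) := by
    rw [brzMul_tmul_left, mulVLeft_unit h.unit_R_left h.unit_σ_left]
  rw [hb, ← h.brzMul_assoc, brzMul_tmul_unit h.unit_σ_right]

theorem IsBrzezinski.φtw_brzMul_twist
    (hθγ : muls2 k A V ∘ₗ lTensor A θ ∘ₗ γ = TensorProduct.mk k A V 1) (x y : A ⊗[k] V) :
    φtw k θ (brzMul k (Rtw k R θ γ) (σtw k R σ θ γ) (x ⊗ₜ y))
      = brzMul k R σ (φtw k θ x ⊗ₜ φtw k θ y) := by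
  induction x using TensorProduct.induction_on with
  | zero => simp
  | tmul a v =>
      induction y using TensorProduct.induction_on with
      | zero => simp
      | tmul b w =>
          simp [brzMul_tmul_left, φtw_smul, mulVRight_σtw, Rtw_tmul, φtw_φtw_of_comp_eq hθγ,
            brzMul_smul_left, h.brzMul_smul_right, mulARight_smul]
      | add p q hp hq => simp [tmul_add, hp, hq]
  | add p q hp hq => simp [add_tmul, hp, hq]

theorem IsBrzezinski.twist (hθe : θ e = (1 : A) ⊗ₜ e) (hγe : γ e = (1 : A) ⊗ₜ e)
    (hγθ : muls2 k A V ∘ₗ lTensor A γ ∘ₗ θ = TensorProduct.mk k A V 1)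
    (hθγ : muls2 k A V ∘ₗ lTensor A θ ∘ₗ γ = TensorProduct.mk k A V 1) :
    IsBrzezinski k e (Rtw k R θ γ) (σtw k R σ θ γ) := by
  have hγθ_apply (v : V) : φtw k γ (θ v) = (1 : A) ⊗ₜ v := LinearMap.congr_fun hγθ v
  refine .of_brzMul_assoc (fun a => ?_) (fun v => ?_) (fun v => ?_) (fun v => ?_)
    (fun x y z => (φtw_bijective hγθ hθγ).injective ?_)
  · simp [Rtw_tmul, hθe, h.unit_R_left, hγe, smul_tmul']
  · rw [Rtw_tmul, mulARight_one h.unit_R_right, hγθ_apply]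
  · rw [σtw_tmul, hθe, brzMul_tmul_left, one_smul, mulVLeft_unit h.unit_R_left h.unit_σ_left,
      hγθ_apply]
  · rw [σtw_tmul, hθe, brzMul_one_tmul h.unit_R_right, mulVRight_unit h.unit_σ_right,
      hγθ_apply]
  · simp only [h.φtw_brzMul_twist hθγ, h.brzMul_assoc]

end Twisting

end Paper

open Paper

theorem statement4_general {k A V : Type u} [Field k] [Ring A] [Algebra k A]
    [AddCommGroup V] [Module k V] (e : V)
    (R : V ⊗[k] A →ₗ[k] A ⊗[k] V) (σ : V ⊗[k] V →ₗ[k] A ⊗[k] V)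
    (h : IsBrzezinski k e R σ) (θ γ : V →ₗ[k] A ⊗[k] V)
    (h123 : Cros123 k e θ γ) :
    IsBrzezinski k e (Rtw k R θ γ) (σtw k R σ θ γ) ∧
    Function.Bijective (φtw k θ) ∧
    φtw k θ ((1 : A) ⊗ₜ e) = (1 : A) ⊗ₜ e ∧
    (∀ x y : A ⊗[k] V,
      φtw k θ (brzMul k (Rtw k R θ γ) (σtw k R σ θ γ) (x ⊗ₜ y))
        = brzMul k R σ (φtw k θ x ⊗ₜ φtw k θ y)) := by
  obtain ⟨hθe, hγe, hγθ, hθγ⟩ := h123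
  exact ⟨h.twist hθe hγe hγθ hθγ, φtw_bijective hγθ hθγ, by simp [hθe],
    h.φtw_brzMul_twist hθγ⟩

/-- invariance under twisting for crossed products. If `(θ, γ)` satisfy
(cros1)--(cros4), then `A ⊗_{R',σ'} V` is a crossed product and
`φ(a ⊗ v) = a v_{<-1>} ⊗ v_{<0>}` is an algebra isomorphism onto `A ⊗_{R,σ} V`. -/
theorem statement4 {k A V : Type u} [Field k] [Ring A] [Algebra k A]
    [AddCommGroup V] [Module k V] (e : V)
    (R : V ⊗[k] A →ₗ[k] A ⊗[k] V) (σ : V ⊗[k] V →ₗ[k] A ⊗[k] V)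
    (h : IsBrzezinski k e R σ) (θ γ : V →ₗ[k] A ⊗[k] V)
    (h123 : Cros123 k e θ γ) (h4 : Cros4 k R σ γ (σtw k R σ θ γ)) :
    IsBrzezinski k e (Rtw k R θ γ) (σtw k R σ θ γ) ∧
    Function.Bijective (φtw k θ) ∧
    φtw k θ ((1 : A) ⊗ₜ e) = (1 : A) ⊗ₜ e ∧
    (∀ x y : A ⊗[k] V,
      φtw k θ (brzMul k (Rtw k R θ γ) (σtw k R σ θ γ) (x ⊗ₜ y))
        = brzMul k R σ (φtw k θ x ⊗ₜ φtw k θ y)) :=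
  statement4_general e R σ h θ γ h123
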